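/- Let p : E → B be a fibration with the homotopically unique homotopy lifting property: for every topological space Y, every continuous F : Y × [0,1] → B and continuous f : Y → E with p(f(y)) = F(y,0) for all y, if F', G' : Y × [0,1] → E are continuous with p ∘ F' = F, F'(y,0) = f(y), p ∘ G' = F, and G'(y,0) = f(y) for all y, then for every fixed y₀ ∈ Y the maps F' and G' are homotopic relative to the set {y₀} × {0,1}. Then p has the weakly unique path homotopically lifting property (wuphl). -/

import Mathlib

/-!
Applied over a one-point space, homotopically unique lifting says that two lifts of a path
with a common starting point are homotopic rel endpoints. Given a homotopy `H : p ∘ α ≃ p ∘ β`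
rel endpoints, lift it to a homotopy `K` from `α` to some `γ`. The tracks of the endpoints under
`K` lift constant paths, so they are null-homotopic, and the square `K` then gives `α ≃ γ`
rel endpoints. Finally `γ` and `β` both lift `p ∘ β` from `β 0`, so `γ ≃ β`.
-/

universe u

open scoped unitInterval

/-- `p` has the weakly unique path homotopically lifting property (wuphl). -/
def Wuphl {E B : Type*} [TopologicalSpace E] [TopologicalSpace B] (p : C(E, B)) : Prop :=
  ∀ α β : C(unitInterval, E), α 0 = β 0 → α 1 = β 1 →
    (p.comp α).HomotopicRel (p.comp β) {0, 1} →
    α.HomotopicRel β {0, 1}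

/-- `p` is a (Hurewicz) fibration: it has the homotopy lifting property with respect to
every topological space. -/
def IsFibration {E B : Type*} [TopologicalSpace E] [TopologicalSpace B] (p : C(E, B)) : Prop :=
  ∀ (X : Type u) [TopologicalSpace X] (f : C(X, E)) (F : C(X × unitInterval, B)),
    (∀ x, F (x, 0) = p (f x)) →
    ∃ F' : C(X × unitInterval, E), (∀ z, p (F' z) = F z) ∧ (∀ x, F' (x, 0) = f x)

universe v

theorem ContinuousMap.HomotopicRel.comp_of_mapsTo {X Y Z : Type*} [TopologicalSpace X]
    [TopologicalSpace Y] [TopologicalSpace Z] {f₀ f₁ : C(Y, Z)} {S : Set Y}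
    (h : f₀.HomotopicRel f₁ S) {g : C(X, Y)} {T : Set X} (hg : Set.MapsTo g T S) :
    (f₀.comp g).HomotopicRel (f₁.comp g) T :=
  h.map fun F => ⟨F.toHomotopy.compContinuousMap g, fun t _ hx => F.prop t (g _) (hg hx)⟩

theorem Path.homotopicRel_of_trans_homotopic {X : Type*} [TopologicalSpace X]
    {x₀ x₁ y₀ y₁ : X} {P : Path x₀ x₁} {Q : Path y₀ y₁} {c₀ : Path x₀ y₀} {c₁ : Path x₁ y₁}
    (hsq : (P.trans c₁).Homotopic (c₀.trans Q))
    (hc₀ : c₀.toContinuousMap.HomotopicRel (.const I x₀) {0, 1})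
    (hc₁ : c₁.toContinuousMap.HomotopicRel (.const I x₁) {0, 1}) :
    P.toContinuousMap.HomotopicRel Q.toContinuousMap {0, 1} := by
  obtain rfl : y₀ = x₀ := by simpa using hc₀.fst_eq_snd (x := 1) (by simp)
  obtain rfl : y₁ = x₁ := by simpa using hc₁.fst_eq_snd (x := 1) (by simp)
  have hc₀' : c₀.Homotopic (.refl _) := hc₀
  have hc₁' : c₁.Homotopic (.refl _) := hc₁
  have hP : P.Homotopic (P.trans (.refl _)) := ⟨(Path.Homotopy.transRefl P).symm⟩
  have hQ : ((Path.refl _).trans Q).Homotopic Q := ⟨Path.Homotopy.reflTrans Q⟩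
  exact hP.trans <| ((Path.Homotopic.refl P).hcomp hc₁'.symm).trans <| hsq.trans <|
    (hc₀'.hcomp (.refl Q)).trans hQ

def HasHomotopicallyUniqueHomotopyLifting {E B : Type*} [TopologicalSpace E]
    [TopologicalSpace B] (p : C(E, B)) : Prop :=
  ∀ (Y : Type u) [TopologicalSpace Y] (F : C(Y × unitInterval, B)) (f : C(Y, E)),
    (∀ y, p (f y) = F (y, 0)) →
    ∀ F' G' : C(Y × unitInterval, E),
      (∀ z, p (F' z) = F z) → (∀ y, F' (y, 0) = f y) →
      (∀ z, p (G' z) = F z) → (∀ y, G' (y, 0) = f y) →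
      ∀ y₀ : Y, F'.HomotopicRel G' ({y₀} ×ˢ ({0, 1} : Set unitInterval))

section

variable {E B : Type*} [TopologicalSpace E] [TopologicalSpace B] {p : C(E, B)}

theorem HasHomotopicallyUniqueHomotopyLifting.homotopicRel_of_comp_eq
    (hp : HasHomotopicallyUniqueHomotopyLifting.{u} p) {γ δ : C(I, E)}
    (hγδ : p.comp γ = p.comp δ) (h₀ : γ 0 = δ 0) : γ.HomotopicRel δ {0, 1} := by
  have h := hp PUnit (p.comp (γ.comp .snd)) (.const _ (γ 0)) (fun _ => rfl)
    (γ.comp .snd) (δ.comp .snd) (fun _ => rfl) (fun _ => rfl)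
    (fun z => congr($hγδ.symm z.2)) (fun _ => h₀.symm) PUnit.unit
  exact h.comp_of_mapsTo (g := .prodMk (.const I PUnit.unit) (.id I))
    fun _ ht => ⟨rfl, ht⟩

theorem IsFibration.exists_homotopy_lift {X : Type v} [TopologicalSpace X]
    (hp : IsFibration.{max u v} p) {f : C(X, E)} {g : C(X, B)} (H : (p.comp f).Homotopy g) :
    ∃ (f' : C(X, E)) (K : f.Homotopy f'), ∀ z, p (K z) = H z := by
  obtain ⟨K, hK, hK₀⟩ := hp (ULift.{u} X) (f.comp ⟨ULift.down, by fun_prop⟩)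
    ⟨fun z => H (z.2, z.1.down), by fun_prop⟩ (fun x => H.apply_zero x.down)
  refine ⟨⟨fun x => K (.up x, 1), by fun_prop⟩,
    { toFun := fun z => K (.up z.2, z.1)
      map_zero_left := fun x => hK₀ (.up x)
      map_one_left := fun _ => rfl }, fun z => hK (.up z.2, z.1)⟩

theorem IsFibration.wuphl_of_lifts_homotopicRel (hp : IsFibration.{u} p)
    (hlift : ∀ γ δ : C(I, E), p.comp γ = p.comp δ → γ 0 = δ 0 → γ.HomotopicRel δ {0, 1}) :
    Wuphl p := by
  rintro α β h₀ h₁ ⟨H⟩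
  obtain ⟨γ, K, hK⟩ := hp.exists_homotopy_lift H.toHomotopy
  have hends : ∀ x ∈ ({0, 1} : Set I),
      (K.evalAt x).toContinuousMap.HomotopicRel (.const I (α x)) {0, 1} := fun x hx =>
    hlift _ _ (by ext s; simp [hK, H.eq_fst s hx]) (by simp)
  have hαγ : α.HomotopicRel γ {0, 1} :=
    Path.homotopicRel_of_trans_homotopic (Path.Homotopic.map_trans_evalAt K Path.id)
      (hends 0 (by simp)) (hends 1 (by simp))
  have hγβ : γ.HomotopicRel β {0, 1} := by
    refine hlift _ _ (by ext t; simpa using hK (1, t)) ?_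
    rw [← hαγ.fst_eq_snd (by simp), h₀]
  exact hαγ.trans hγβ

end

theorem wuphl_of_homotopically_unique_homotopy_lifting {E B : Type*} [TopologicalSpace E]
    [TopologicalSpace B] (p : C(E, B)) (hp : IsFibration p)
    (huniq : ∀ (Y : Type u) [TopologicalSpace Y] (F : C(Y × unitInterval, B)) (f : C(Y, E)),
      (∀ y, p (f y) = F (y, 0)) →
      ∀ F' G' : C(Y × unitInterval, E),
        (∀ z, p (F' z) = F z) → (∀ y, F' (y, 0) = f y) →
        (∀ z, p (G' z) = F z) → (∀ y, G' (y, 0) = f y) →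
        ∀ y₀ : Y, F'.HomotopicRel G' ({y₀} ×ˢ ({0, 1} : Set unitInterval))) :
    Wuphl p :=
  hp.wuphl_of_lifts_homotopicRel fun _ _ => HasHomotopicallyUniqueHomotopyLifting.homotopicRel_of_comp_eq huniq
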